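/- arXiv:2603.06259 — 9 statements merged into one kernel-verified Lean document; each statement's English description precedes it below -/
import Mathlib

section
/- Let k be an algebraically closed field, R a reduced finitely generated commutative k-algebra, and M a finitely generated R-module. If the function assigning to each maximal ideal m of R the dimension dim_{R/m}(M/(m•M)) is locally constant on the maximal spectrum of R with its Zariski topology, then M is a projective R-module. -/
/-- The Zariski topology on the maximal spectrum, induced from the prime spectrum. -/
noncomputable instance maximalSpectrumTopology (R : Type*) [CommRing R] :
    TopologicalSpace (MaximalSpectrum R) :=
  TopologicalSpace.induced MaximalSpectrum.toPrimeSpectrum inferInstance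

/-- The localization of a finite free module is free over the localized ring. -/
lemma free_localizedModule_pi {R : Type*} [CommRing R] (S : Submonoid R) (n : ℕ) :
    Module.Free (Localization S) (LocalizedModule S (Fin n → R)) := by
  let e0 : (Fin n → R) ≃ₗ[R] (Fin n →₀ R) := (Finsupp.linearEquivFunOnFinite R R (Fin n)).symm
  let g : (Fin n →₀ R) →ₗ[R] (Fin n →₀ Localization S) :=
    Finsupp.mapRange.linearMap (Algebra.linearMap R (Localization S))
  have hloc : IsLocalizedModule S (g ∘ₗ e0.toLinearMap) := inferInstance
  let e : LocalizedModule S (Fin n → R) ≃ₗ[R] (Fin n →₀ Localization S) :=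
    IsLocalizedModule.iso S (g ∘ₗ e0.toLinearMap)
  let e' : LocalizedModule S (Fin n → R) ≃ₗ[Localization S] (Fin n →₀ Localization S) :=
    { __ := e, toLinearMap := e.extendScalarsOfIsLocalization S (Localization S) }
  exact Module.Free.of_equiv e'.symm


/-- If `M` is a finitely generated module over a reduced finitely generated algebra `R` over an
algebraically closed field `k`, and the fiber dimension `m ↦ dim_{R/m} M/(m•M)` is locally
constant on the maximal spectrum of `R`, then `M` is projective. -/
theorem projective_of_isLocallyConstant_fiber_dim
    (k : Type*) [Field k] [IsAlgClosed k]
    (R : Type*) [CommRing R] [IsReduced R] [Algebra k R] [Algebra.FiniteType k R]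
    (M : Type*) [AddCommGroup M] [Module R M] [Module.Finite R M]
    (hlc : IsLocallyConstant fun m : MaximalSpectrum R =>
      Module.finrank (R ⧸ m.asIdeal) (M ⧸ (m.asIdeal • ⊤ : Submodule R M))) :
    Module.Projective R M := by
  classical
  have hNoeth : IsNoetherianRing R := Algebra.FiniteType.isNoetherianRing k R
  have hFP : Module.FinitePresentation R M := Module.finitePresentation_of_finite R M
  have hJac : IsJacobsonRing R := isJacobsonRing_of_finiteType (A := k)
  have hjbot : (Ideal.jacobson (⊥ : Ideal R)) = ⊥ := by
    refine hJac.out' _ ?_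
    rw [← Ideal.radical_eq_iff]
    have h : nilradical R = 0 := nilradical_eq_zero R
    simpa [nilradical, Submodule.zero_eq_bot] using h
  apply Module.projective_of_localization_maximal
  intro I hI
  haveI := hI
  haveI hfinI : Module.Finite (R ⧸ I) (M ⧸ (I • ⊤ : Submodule R M)) :=
    Module.Finite.of_restrictScalars_finite R _ _
  set n := Module.finrank (R ⧸ I) (M ⧸ (I • ⊤ : Submodule R M)) with hn
  obtain ⟨b⟩ : Nonempty (Module.Basis (Fin n) (R ⧸ I) (M ⧸ (I • ⊤ : Submodule R M))) := by
    letI := Ideal.Quotient.field I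
    exact ⟨Module.finBasis _ _⟩
  choose x hx using fun i => Submodule.Quotient.mk_surjective (I • ⊤ : Submodule R M) (b i)
  let φ : (Fin n → R) →ₗ[R] M := Fintype.linearCombination R x
  have hφ : ∀ w : Fin n → R, φ w = ∑ i, w i • x i := fun w => rfl
  -- generation at I
  have hgenI : ∀ y : M, y ∈ LinearMap.range φ ⊔ (I • ⊤ : Submodule R M) := by
    intro y
    set c := b.repr (Submodule.Quotient.mk y) with hc
    choose r hr using fun i => Ideal.Quotient.mk_surjective (I := I) (c i)
    have hmkp : Submodule.Quotient.mk (p := (I • ⊤ : Submodule R M)) (φ r)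
        = Submodule.Quotient.mk y := by
      rw [hφ, ← Submodule.mkQ_apply, map_sum]
      simp only [Submodule.mkQ_apply]
      calc ∑ i, Submodule.Quotient.mk (p := (I • ⊤ : Submodule R M)) (r i • x i)
          = ∑ i, c i • b i := by
            refine Finset.sum_congr rfl fun i _ => ?_
            rw [← hr i, ← hx i, Module.Quotient.mk_smul_mk]
        _ = Submodule.Quotient.mk y := b.sum_repr _
    have hmem : y - φ r ∈ (I • ⊤ : Submodule R M) := by
      rw [← Submodule.Quotient.eq]
      exact hmkp.symm
    have hy : y = φ r + (y - φ r) := by abel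
    rw [hy]
    exact Submodule.add_mem_sup (LinearMap.mem_range_self φ r) hmem
  -- Nakayama
  obtain ⟨f, hf1, hf0⟩ :
      ∃ f : R, f - 1 ∈ I ∧ ∀ c ∈ (⊤ : Submodule R (M ⧸ LinearMap.range φ)), f • c = 0 := by
    refine Submodule.exists_sub_one_mem_and_smul_eq_zero_of_fg_of_le_smul I ⊤
      (Module.Finite.fg_top (R := R)) ?_
    rintro c -
    obtain ⟨y, rfl⟩ := Submodule.Quotient.mk_surjective _ c
    obtain ⟨p, hp, q, hq, hpq⟩ := Submodule.mem_sup.mp (hgenI y)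
    have h1 : Submodule.Quotient.mk (p := LinearMap.range φ) y
        = Submodule.Quotient.mk q := by
      rw [Submodule.Quotient.eq]
      have h2 : y - q = p := by rw [← hpq]; abel
      rw [h2]; exact hp
    rw [h1]
    have h3 : Submodule.Quotient.mk (p := LinearMap.range φ) q
        ∈ Submodule.map (LinearMap.range φ).mkQ (I • ⊤ : Submodule R M) :=
      Submodule.mem_map_of_mem hq
    rw [Submodule.map_smul''] at h3
    exact Submodule.smul_mono le_rfl le_top h3
  have hfI : f ∉ I := by
    intro hfmem
    have h1 : (1 : R) ∈ I := by
      have := I.sub_mem hfmem hf1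
      rwa [sub_sub_cancel] at this
    exact hI.ne_top ((Ideal.eq_top_iff_one I).mpr h1)
  have hfM : ∀ y : M, f • y ∈ LinearMap.range φ := by
    intro y
    have := hf0 (Submodule.Quotient.mk y) trivial
    rwa [← Submodule.Quotient.mk_smul, Submodule.Quotient.mk_eq_zero] at this
  -- generation at any maximal J not containing f
  have hgen : ∀ J : Ideal R, J.IsMaximal → f ∉ J →
      ∀ y : M, y ∈ LinearMap.range φ ⊔ (J • ⊤ : Submodule R M) := by
    intro J hJ hfJ y
    obtain ⟨t, i, hiJ, hti⟩ := hJ.exists_inv hfJ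
    have hy : y = t • (f • y) + i • y := by
      rw [smul_smul, ← add_smul, hti, one_smul]
    rw [hy]
    exact Submodule.add_mem_sup (Submodule.smul_mem _ t (hfM y))
      (Submodule.smul_mem_smul hiJ trivial)
  -- entries of kernel elements lie in every good maximal ideal
  have hker : ∀ (J : Ideal R) (hJm : J.IsMaximal), f ∉ J →
      Module.finrank (R ⧸ J) (M ⧸ (J • ⊤ : Submodule R M)) = n →
      ∀ z : Fin n → R, φ z = 0 → ∀ i, z i ∈ J := by
    intro J hJm hfJ hrank z hz i
    haveI := hJm
    letI := Ideal.Quotient.field J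
    haveI : Module.Finite (R ⧸ J) (M ⧸ (J • ⊤ : Submodule R M)) :=
      Module.Finite.of_restrictScalars_finite R _ _
    set v : Fin n → (M ⧸ (J • ⊤ : Submodule R M)) :=
      fun i => Submodule.Quotient.mk (x i) with hv
    set ψ : (Fin n → R ⧸ J) →ₗ[R ⧸ J] (M ⧸ (J • ⊤ : Submodule R M)) :=
      Fintype.linearCombination (R ⧸ J) v with hψ
    have hcomp : ∀ w : Fin n → R,
        ψ (fun i => Ideal.Quotient.mk J (w i))
          = Submodule.Quotient.mk (p := (J • ⊤ : Submodule R M)) (φ w) := by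
      intro w
      rw [hψ, Fintype.linearCombination_apply, hφ, ← Submodule.mkQ_apply, map_sum]
      refine Finset.sum_congr rfl fun i _ => ?_
      rw [Submodule.mkQ_apply, hv, Module.Quotient.mk_smul_mk]
    have hsurj : Function.Surjective ψ := by
      intro w
      obtain ⟨y, rfl⟩ := Submodule.Quotient.mk_surjective _ w
      obtain ⟨p, hp, q, hq, hpq⟩ := Submodule.mem_sup.mp (hgen J hJm hfJ y)
      obtain ⟨r, rfl⟩ := hp
      refine ⟨fun i => Ideal.Quotient.mk J (r i), ?_⟩
      rw [hcomp, Submodule.Quotient.eq]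
      have h4 : φ r - y = -q := by rw [← hpq]; abel
      rw [h4]
      exact Submodule.neg_mem _ hq
    have hinj : Function.Injective ψ := by
      refine (LinearMap.injective_iff_surjective_of_finrank_eq_finrank ?_).mpr hsurj
      have h5 : Module.finrank (R ⧸ J) (Fin n → R ⧸ J) = n := Module.finrank_fin_fun _
      exact h5.trans hrank.symm
    have h6 : ψ (fun i => Ideal.Quotient.mk J (z i)) = ψ 0 := by
      rw [hcomp, hz, map_zero, Submodule.Quotient.mk_zero]
    have h0 := congrFun (hinj h6) i
    rw [Pi.zero_apply] at h0
    exact (Ideal.Quotient.eq_zero_iff_mem).mp h0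
  -- topology: find g
  have hU : IsOpen ((fun m : MaximalSpectrum R =>
      Module.finrank (R ⧸ m.asIdeal) (M ⧸ (m.asIdeal • ⊤ : Submodule R M))) ⁻¹' {n}) :=
    hlc {n}
  obtain ⟨T, hT, hTU⟩ := isOpen_induced_iff.mp hU
  set m : MaximalSpectrum R := ⟨I, hI⟩ with hm
  have hmU : m ∈ (fun m : MaximalSpectrum R =>
      Module.finrank (R ⧸ m.asIdeal) (M ⧸ (m.asIdeal • ⊤ : Submodule R M))) ⁻¹' {n} := rfl
  have hmT : m.toPrimeSpectrum ∈ T := by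
    rw [← hTU] at hmU; exact hmU
  have hmV : m.toPrimeSpectrum ∈ T ∩ ↑(PrimeSpectrum.basicOpen f) :=
    ⟨hmT, (PrimeSpectrum.mem_basicOpen f _).mpr hfI⟩
  obtain ⟨s, ⟨g, rfl⟩, hms, hsV⟩ :=
    PrimeSpectrum.isTopologicalBasis_basic_opens.exists_subset_of_mem_open hmV
      (hT.inter (PrimeSpectrum.basicOpen f).isOpen)
  have hgI : g ∉ I := (PrimeSpectrum.mem_basicOpen g _).mp hms
  -- g kills the kernel
  have hK : ∀ z : Fin n → R, φ z = 0 → ∀ i, g * z i = 0 := by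
    intro z hz i
    have hmemjac : g * z i ∈ Ideal.jacobson (⊥ : Ideal R) := by
      rw [Ideal.jacobson, Ideal.mem_sInf]
      rintro J ⟨-, hJmax⟩
      by_cases hgJ : g ∈ J
      · exact J.mul_mem_right _ hgJ
      · have hJb : (⟨J, hJmax⟩ : MaximalSpectrum R).toPrimeSpectrum
            ∈ (↑(PrimeSpectrum.basicOpen g) : Set (PrimeSpectrum R)) :=
          (PrimeSpectrum.mem_basicOpen g _).mpr hgJ
        obtain ⟨hJT, hJf⟩ := hsV hJb
        have hfJ : f ∉ J := (PrimeSpectrum.mem_basicOpen f _).mp hJf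
        have hJU : (⟨J, hJmax⟩ : MaximalSpectrum R) ∈ (fun m : MaximalSpectrum R =>
            Module.finrank (R ⧸ m.asIdeal) (M ⧸ (m.asIdeal • ⊤ : Submodule R M))) ⁻¹' {n} := by
          rw [← hTU]; exact hJT
        exact Ideal.mul_mem_left _ g (hker J hJmax hfJ hJU z hz i)
    rwa [hjbot, Ideal.mem_bot] at hmemjac
  -- conclude: the localized map is bijective
  have hgS : g ∈ I.primeCompl := hgI
  have hfS : f ∈ I.primeCompl := hfI
  have hbij : Function.Bijective (LocalizedModule.map I.primeCompl φ) := by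
    constructor
    · intro a b
      induction a using LocalizedModule.induction_on with
      | h wa sa =>
      induction b using LocalizedModule.induction_on with
      | h wb sb =>
      intro hab
      rw [LocalizedModule.map_mk, LocalizedModule.map_mk, LocalizedModule.mk_eq] at hab
      obtain ⟨u, hu⟩ := hab
      simp only [Submonoid.smul_def] at hu
      have hz0 : φ ((u : R) • (sb : R) • wa - (u : R) • (sa : R) • wb) = 0 := by
        rw [map_sub, map_smul, map_smul, map_smul, map_smul, hu, sub_self]
      have hgz : g • ((u : R) • (sb : R) • wa - (u : R) • (sa : R) • wb) = (0 : Fin n → R) := by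
        funext i
        simpa [smul_eq_mul] using hK _ hz0 i
      rw [smul_sub, sub_eq_zero] at hgz
      rw [LocalizedModule.mk_eq]
      refine ⟨⟨g, hgS⟩ * u, ?_⟩
      simp only [Submonoid.smul_def, Submonoid.coe_mul, mul_smul]
      exact hgz
    · intro y
      induction y using LocalizedModule.induction_on with
      | h z s =>
      obtain ⟨w, hw⟩ := hfM z
      refine ⟨LocalizedModule.mk w (⟨f, hfS⟩ * s), ?_⟩
      rw [LocalizedModule.map_mk, hw,
        show (f • z : M) = (⟨f, hfS⟩ : I.primeCompl) • z from rfl]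
      exact LocalizedModule.mk_cancel_common_left _ s z
  haveI hfree : Module.Free (Localization I.primeCompl) (LocalizedModule I.primeCompl (Fin n → R)) :=
    free_localizedModule_pi I.primeCompl n
  have e := LinearEquiv.ofBijective (LocalizedModule.map I.primeCompl φ) hbij
  haveI : Module.Free (Localization.AtPrime I) (LocalizedModule I.primeCompl M) :=
    Module.Free.of_equiv e
  infer_instance
end

section
/- Let k be an algebraically closed field, R a reduced finitely generated commutative k-algebra, and M a finitely generated R-module such that the function assigning to each maximal ideal m of R the dimension dim_{R/m}(M/(m•M)) is locally constant on the maximal spectrum of R with its Zariski topology. Let m₀ be a maximal ideal of R and let m₁, …, mₙ be elements of M whose images in M/(m₀•M) form a basis over the residue field R/m₀. Then there exists f ∈ R with f ∉ m₀ such that the images of m₁, …, mₙ in the localized module M_f form a basis of M_f over the localization R_f. -/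
/-- If `M` is a finitely generated module with locally constant fiber dimension over a reduced
finitely generated algebra over an algebraically closed field, and elements `m₁, …, mₙ` of `M`
induce a basis of the fiber `M/(m₀•M)` at a maximal ideal `m₀`, then there exists `f ∉ m₀` such
that the images of the `mᵢ` form a basis of the localized module `M_f` over `R_f`. -/
theorem exists_localization_basis_of_fiber_basis
    (k : Type*) [Field k] [IsAlgClosed k]
    (R : Type*) [CommRing R] [IsReduced R] [Algebra k R] [Algebra.FiniteType k R]
    (M : Type*) [AddCommGroup M] [Module R M] [Module.Finite R M]
    (hlc : IsLocallyConstant fun m : MaximalSpectrum R =>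
      Module.finrank (R ⧸ m.asIdeal) (M ⧸ (m.asIdeal • ⊤ : Submodule R M)))
    (m₀ : MaximalSpectrum R) (n : ℕ) (ξ : Fin n → M)
    (b : Module.Basis (Fin n) (R ⧸ m₀.asIdeal) (M ⧸ (m₀.asIdeal • ⊤ : Submodule R M)))
    (hb : ∀ i, b i = Submodule.Quotient.mk (ξ i)) :
    ∃ f : R, f ∉ m₀.asIdeal ∧
      ∃ c : Module.Basis (Fin n) (Localization.Away f)
        (LocalizedModule (Submonoid.powers f) M),
        ∀ i, c i = LocalizedModule.mkLinearMap (Submonoid.powers f) M (ξ i) := by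
  classical
  haveI : IsJacobsonRing R := isJacobsonRing_of_finiteType (A := k)
  -- Step A : on a basic open neighbourhood of m₀ the fiber dimension is n
  have hopen : IsOpen {m : MaximalSpectrum R |
      Module.finrank (R ⧸ m.asIdeal) (M ⧸ (m.asIdeal • ⊤ : Submodule R M)) = n} :=
    hlc.isOpen_fiber n
  have hm₀n : Module.finrank (R ⧸ m₀.asIdeal) (M ⧸ (m₀.asIdeal • ⊤ : Submodule R M)) = n := by
    rw [Module.finrank_eq_card_basis b, Fintype.card_fin]
  obtain ⟨V, hV, hVeq⟩ := isOpen_induced_iff.mp hopen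
  have hm₀V : m₀.toPrimeSpectrum ∈ V := by
    have : m₀ ∈ MaximalSpectrum.toPrimeSpectrum ⁻¹' V := by rw [hVeq]; exact hm₀n
    exact this
  obtain ⟨W, ⟨g, rfl⟩, hgW, hWV⟩ :=
    PrimeSpectrum.isTopologicalBasis_basic_opens.exists_subset_of_mem_open hm₀V hV
  have hg₀ : g ∉ m₀.asIdeal := (PrimeSpectrum.mem_basicOpen g _).mp hgW
  have hg : ∀ m : MaximalSpectrum R, g ∉ m.asIdeal →
      Module.finrank (R ⧸ m.asIdeal) (M ⧸ (m.asIdeal • ⊤ : Submodule R M)) = n := by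
    intro m hm
    have h1 : m.toPrimeSpectrum ∈ V := hWV ((PrimeSpectrum.mem_basicOpen g _).mpr hm)
    have h2 : m ∈ MaximalSpectrum.toPrimeSpectrum ⁻¹' V := h1
    rw [hVeq] at h2
    exact h2
  -- Step B : Nakayama, find r ∉ m₀ with r • M ⊆ span ξ
  set N : Submodule R M := Submodule.span R (Set.range ξ) with hN
  have hspan : N ⊔ (m₀.asIdeal • ⊤ : Submodule R M) = ⊤ := by
    have hsurj : Function.Surjective (algebraMap R (R ⧸ m₀.asIdeal)) := by
      rw [Ideal.Quotient.algebraMap_eq]; exact Ideal.Quotient.mk_surjective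
    have hmap : Submodule.map (m₀.asIdeal • ⊤ : Submodule R M).mkQ N = ⊤ := by
      rw [hN, Submodule.map_span, ← Set.range_comp]
      have hrange : (((m₀.asIdeal • ⊤ : Submodule R M).mkQ) ∘ ξ) = ⇑b := by
        funext i
        rw [Function.comp_apply, hb i, Submodule.mkQ_apply]
      rw [hrange, ← Submodule.restrictScalars_span R (R ⧸ m₀.asIdeal) hsurj, b.span_eq,
        Submodule.restrictScalars_top]
    have := congrArg (Submodule.comap (m₀.asIdeal • ⊤ : Submodule R M).mkQ) hmap
    rwa [Submodule.comap_map_eq, Submodule.ker_mkQ, Submodule.comap_top] at this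
  have htopQ : (⊤ : Submodule R (M ⧸ N)) ≤ m₀.asIdeal • (⊤ : Submodule R (M ⧸ N)) := by
    have h1 : Submodule.map N.mkQ (N ⊔ (m₀.asIdeal • ⊤ : Submodule R M)) = ⊤ := by
      rw [hspan, Submodule.map_top, Submodule.range_mkQ]
    rw [Submodule.map_sup, Submodule.map_smul'', Submodule.map_top, Submodule.range_mkQ] at h1
    have h2 : Submodule.map N.mkQ N = ⊥ := by
      rw [eq_bot_iff]
      rw [Submodule.map_le_iff_le_comap]
      intro x hx
      simp only [Submodule.mem_comap, Submodule.mem_bot, Submodule.mkQ_apply,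
        Submodule.Quotient.mk_eq_zero]
      exact hx
    rw [h2, bot_sup_eq] at h1
    exact h1.ge
  obtain ⟨r, hr1, hr0⟩ :=
    Submodule.exists_sub_one_mem_and_smul_eq_zero_of_fg_of_le_smul m₀.asIdeal ⊤
      Module.Finite.fg_top htopQ
  have hr₀ : r ∉ m₀.asIdeal := by
    intro hr
    have : (1 : R) ∈ m₀.asIdeal := by
      have := m₀.asIdeal.sub_mem hr hr1
      simpa using this
    exact m₀.isMaximal.ne_top (Ideal.eq_top_of_isUnit_mem _ this isUnit_one)
  have hrN : ∀ x : M, r • x ∈ N := by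
    intro x
    have := hr0 (N.mkQ x) Submodule.mem_top
    rw [← map_smul, Submodule.mkQ_apply, Submodule.Quotient.mk_eq_zero] at this
    exact this
  -- the element f
  refine ⟨g * r, fun hmem => ?_, ?_⟩
  · rcases m₀.isMaximal.isPrime.mem_or_mem hmem with h | h
    · exact hg₀ h
    · exact hr₀ h
  set f : R := g * r with hf
  have hfN : ∀ x : M, f • x ∈ N := by
    intro x
    rw [hf, mul_smul]
    exact N.smul_mem g (hrN x)
  -- linear independence of the images of ξ in every fiber at a maximal ideal avoiding f
  have hindep : ∀ (m : Ideal R), m.IsMaximal → f ∉ m →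
      ∀ c : Fin n → R, (∑ i, c i • ξ i) = 0 → ∀ i, c i ∈ m := by
    intro m hm hfm c hc i
    letI : Field (R ⧸ m) := Ideal.Quotient.field m
    have hgm : g ∉ m := fun h => hfm (Ideal.mul_mem_right r m h)
    have hfin : Module.finrank (R ⧸ m) (M ⧸ (m • ⊤ : Submodule R M)) = n :=
      hg ⟨m, hm⟩ hgm
    haveI : Module.Finite (R ⧸ m) (M ⧸ (m • ⊤ : Submodule R M)) :=
      Module.Finite.of_restrictScalars_finite R _ _
    set π := (m • ⊤ : Submodule R M).mkQ with hπ
    have hfbar : (Ideal.Quotient.mk m f) ≠ 0 := fun h =>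
      hfm ((Ideal.Quotient.eq_zero_iff_mem).mp h)
    have hsub : N ≤ Submodule.comap π
        (Submodule.restrictScalars R (Submodule.span (R ⧸ m) (Set.range (π ∘ ξ)))) := by
      rw [hN, Submodule.span_le]
      rintro _ ⟨i, rfl⟩
      exact Submodule.subset_span ⟨i, rfl⟩
    have htopF : ⊤ ≤ Submodule.span (R ⧸ m) (Set.range (π ∘ ξ)) := by
      rintro y -
      obtain ⟨x, rfl⟩ := Submodule.mkQ_surjective _ y
      have h1 : π (f • x) ∈ Submodule.span (R ⧸ m) (Set.range (π ∘ ξ)) := hsub (hfN x)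
      have h2 : (Ideal.Quotient.mk m f) • ((m • ⊤ : Submodule R M)).mkQ x = π (f • x) := rfl
      have h3 : ((m • ⊤ : Submodule R M)).mkQ x
          = (Ideal.Quotient.mk m f)⁻¹ • ((Ideal.Quotient.mk m f) • π x) := by
        rw [inv_smul_smul₀ hfbar]
      rw [Submodule.mkQ_apply] at h3 ⊢
      rw [h3]
      exact Submodule.smul_mem _ _ (by rw [← Submodule.mkQ_apply, h2]; exact h1)
    have hli : LinearIndependent (R ⧸ m) (π ∘ ξ) :=
      linearIndependent_of_top_le_span_of_card_eq_finrank htopF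
        (by rw [Fintype.card_fin, hfin])
    have hzero : (∑ j, (Ideal.Quotient.mk m (c j)) • (π ∘ ξ) j) = 0 := by
      have h0 : π (∑ j, c j • ξ j) = 0 := by rw [hc, map_zero]
      rw [map_sum] at h0
      calc (∑ j, (Ideal.Quotient.mk m (c j)) • (π ∘ ξ) j)
          = ∑ j, π (c j • ξ j) := Finset.sum_congr rfl fun j _ => rfl
        _ = 0 := h0
    have := Fintype.linearIndependent_iff.mp hli _ hzero i
    exact (Ideal.Quotient.eq_zero_iff_mem).mp this
  -- the localization
  set S : Submonoid R := Submonoid.powers f with hS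
  set A : Type _ := Localization.Away f with hA
  set M' : Type _ := LocalizedModule S M with hM'
  haveI : IsJacobsonRing A := isJacobsonRing_localization (S := A) f
  set v : Fin n → M' := fun i => LocalizedModule.mkLinearMap S M (ξ i) with hv
  set φ : (Fin n → A) →ₗ[A] M' := Fintype.linearCombination A v with hφ
  -- surjectivity
  have hsurj : Function.Surjective φ := by
    rw [← LinearMap.range_eq_top, hφ, Fintype.range_linearCombination, eq_top_iff]
    rintro z -
    induction z using LocalizedModule.induction_on with
    | _ x s =>
      have h1 : LocalizedModule.mk (f • x) (1 : S) ∈ Submodule.span A (Set.range v) := by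
        have hsub : N ≤ Submodule.comap (LocalizedModule.mkLinearMap S M)
            (Submodule.restrictScalars R (Submodule.span A (Set.range v))) := by
          rw [hN, Submodule.span_le]
          rintro _ ⟨i, rfl⟩
          exact Submodule.subset_span ⟨i, rfl⟩
        exact hsub (hfN x)
      have h2 : LocalizedModule.mk x s
          = Localization.mk 1 (s * ⟨f, Submonoid.mem_powers f⟩) •
            LocalizedModule.mk (f • x) (1 : S) := by
        rw [LocalizedModule.mk_smul_mk, one_smul, mul_one, LocalizedModule.mk_eq]
        refine ⟨1, ?_⟩
        simp only [one_smul, Submonoid.smul_def, Submonoid.coe_mul]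
        rw [mul_smul]
      rw [h2]
      exact Submodule.smul_mem _ _ h1
  -- injectivity
  have hinj : Function.Injective φ := by
    rw [← LinearMap.ker_eq_bot, LinearMap.ker_eq_bot']
    intro x hx
    obtain ⟨s, hs⟩ := IsLocalization.exist_integer_multiples_of_finite S x
    choose r hr using hs
    have hφr : φ (fun i => algebraMap R A (r i)) = LocalizedModule.mkLinearMap S M
        (∑ i, r i • ξ i) := by
      rw [hφ, Fintype.linearCombination_apply, map_sum]
      refine Finset.sum_congr rfl fun i _ => ?_
      rw [algebraMap_smul, hv, map_smul]
    have hφr0 : φ (fun i => algebraMap R A (r i)) = 0 := by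
      have heq : (fun i => algebraMap R A (r i)) = (s : R) • x := by
        funext i
        rw [Pi.smul_apply, ← Submonoid.smul_def]
        exact hr i
      rw [heq, LinearMap.map_smul_of_tower, hx, smul_zero]
    have hmk0 : LocalizedModule.mk (∑ i, r i • ξ i) (1 : S) = LocalizedModule.mk 0 (1 : S) := by
      have := hφr0
      rw [hφr] at this
      rw [show LocalizedModule.mk (0 : M) (1 : S) = (0 : M') from LocalizedModule.zero_mk 1]
      exact this
    rw [LocalizedModule.mk_eq] at hmk0
    obtain ⟨u, hu⟩ := hmk0
    simp only [one_smul, smul_zero] at hu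
    -- hu : u • ∑ i, r i • ξ i = 0
    obtain ⟨w, hw⟩ := u.2
    have hsum : (∑ i, (f ^ w * r i) • ξ i) = 0 := by
      rw [← hu, Submonoid.smul_def, ← hw, Finset.smul_sum]
      refine Finset.sum_congr rfl fun i _ => ?_
      rw [smul_smul]
    have hrm : ∀ i, ∀ (m : Ideal R), m.IsMaximal → f ∉ m → r i ∈ m := by
      intro i m hm hfm
      have h1 := hindep m hm hfm _ hsum i
      rcases hm.isPrime.mem_or_mem h1 with h | h
      · exact absurd (hm.isPrime.mem_of_pow_mem w h) hfm
      · exact h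
    have hr0 : ∀ i, algebraMap R A (r i) = 0 := by
      intro i
      have hjac : algebraMap R A (r i) ∈ Ideal.jacobson (⊥ : Ideal A) := by
        rw [Ideal.jacobson]
        refine Ideal.mem_sInf.mpr ?_
        rintro J ⟨-, hJ⟩
        obtain ⟨hcm, hfc⟩ := (IsLocalization.isMaximal_iff_isMaximal_disjoint A f J).mp hJ
        exact Ideal.mem_comap.mp (hrm i _ hcm hfc)
      rw [← Ideal.radical_eq_jacobson] at hjac
      obtain ⟨w', hw'⟩ := hjac
      rw [Ideal.mem_bot] at hw'
      exact IsNilpotent.eq_zero ⟨w', hw'⟩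
    have hxz : ∀ i, x i = 0 := by
      intro i
      have h1 : (s : R) • x i = 0 := by rw [← hr i, hr0 i]
      rw [Algebra.smul_def] at h1
      exact ((IsLocalization.map_units A s).mul_right_eq_zero).mp h1
    funext i
    exact hxz i
  -- conclusion
  let e : (Fin n → A) ≃ₗ[A] M' := LinearEquiv.ofBijective φ ⟨hinj, hsurj⟩
  refine ⟨(Pi.basisFun A (Fin n)).map e, fun i => ?_⟩
  rw [Module.Basis.map_apply, Pi.basisFun_apply]
  show φ (Pi.single i 1) = _
  rw [hφ,
    Fintype.linearCombination_apply_single, one_smul, hv]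
end

section
/- Let G be a group acting on a commutative ring R by ring automorphisms, and let M be a finitely generated R-module which is a covariant (G,R)-module and is simple as a covariant module. Then the annihilator Ann_R(M) is a proper G-stable ideal of R which is maximal among proper G-stable ideals: every G-stable ideal of R strictly containing Ann_R(M) equals R. -/
/-- If `M` is a finitely generated `R`-module which is a covariant `(G,R)`-module (i.e. `G` acts
on `M` by additive automorphisms compatibly with its action on `R`) and `M` is simple as a
covariant module, then the annihilator of `M` is a proper `G`-stable ideal of `R` which is
maximal among proper `G`-stable ideals. -/
theorem annihilator_maximal_G_stable_of_simple_covariant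
    (G : Type*) [Group G] (R : Type*) [CommRing R] [MulSemiringAction G R]
    (M : Type*) [AddCommGroup M] [Module R M] [DistribMulAction G M]
    (hcompat : ∀ (g : G) (r : R) (m : M), g • (r • m) = (g • r) • (g • m))
    (hfg : Module.Finite R M)
    (hnt : Nontrivial M)
    (hsimple : ∀ N : Submodule R M, (∀ g : G, ∀ n ∈ N, g • n ∈ N) → N = ⊥ ∨ N = ⊤) :
    (⊤ : Submodule R M).annihilator ≠ ⊤ ∧
    (∀ g : G, ∀ r ∈ (⊤ : Submodule R M).annihilator, g • r ∈ (⊤ : Submodule R M).annihilator) ∧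
    ∀ J : Ideal R, (∀ g : G, ∀ x ∈ J, g • x ∈ J) →
      (⊤ : Submodule R M).annihilator < J → J = ⊤ := by
  refine ⟨?_, ?_, ?_⟩
  · intro h
    obtain ⟨m, hm⟩ := exists_ne (0 : M)
    have h1 : (1 : R) ∈ (⊤ : Submodule R M).annihilator := h ▸ Submodule.mem_top
    rw [Submodule.mem_annihilator] at h1
    exact hm (by simpa using h1 m Submodule.mem_top)
  · intro g r hr
    rw [Submodule.mem_annihilator] at hr ⊢
    intro m _
    have : (g • r) • m = g • (r • (g⁻¹ • m)) := by
      rw [hcompat, smul_inv_smul]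
    rw [this, hr _ Submodule.mem_top, smul_zero]
  · intro J hJstab hlt
    set N : Submodule R M := J • ⊤ with hN
    have hstab : ∀ g : G, ∀ n ∈ N, g • n ∈ N := by
      intro g n hn
      refine Submodule.smul_induction_on hn ?_ ?_
      · intro r hr m _
        rw [hcompat]
        exact Submodule.smul_mem_smul (hJstab g r hr) Submodule.mem_top
      · intro a b ha hb
        rw [smul_add]; exact N.add_mem ha hb
    rcases hsimple N hstab with hbot | htop
    · exfalso
      apply hlt.not_ge
      intro r hr
      rw [Submodule.mem_annihilator]
      intro m _
      have : r • m ∈ N := Submodule.smul_mem_smul hr Submodule.mem_top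
      rw [hbot] at this
      simpa using this
    · obtain ⟨r, hr1, hr2⟩ :=
        Submodule.exists_sub_one_mem_and_smul_eq_zero_of_fg_of_le_smul J ⊤
          hfg.fg_top (by rw [← hN, htop])
      have hrann : r ∈ (⊤ : Submodule R M).annihilator := by
        rw [Submodule.mem_annihilator]; intro m _; exact hr2 m Submodule.mem_top
      have hrJ : r ∈ J := hlt.le hrann
      have : (1 : R) ∈ J := by
        have := J.sub_mem hrJ hr1
        simpa using this
      exact (Ideal.eq_top_iff_one J).mpr this
end

section
/- Let k be an algebraically closed field, R a finitely generated commutative k-algebra, and G a group acting on R by k-algebra automorphisms. Let M be a finitely generated R-module which is a covariant (G,R)-module and is simple as a covariant module, and let I = Ann_R(M). Then the zero locus Z = { m a maximal ideal of R : I ⊆ m } is a nonempty closed G-stable subset of the maximal spectrum of R which is minimal among nonempty closed G-stable subsets, and I equals the intersection of all maximal ideals belonging to Z. -/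
/-- The action of a group `G` acting on `R` by ring automorphisms on the maximal spectrum of
`R`: `g` sends a maximal ideal `m` to its image under the automorphism `r ↦ g • r` (which is
computed as the preimage under `r ↦ g⁻¹ • r`). -/
noncomputable def MaximalSpectrum.smul {G R : Type*} [Group G] [CommRing R]
    [MulSemiringAction G R] (g : G) (m : MaximalSpectrum R) : MaximalSpectrum R :=
  ⟨Ideal.comap (MulSemiringAction.toRingHom G R g⁻¹) m.asIdeal,
    Ideal.comap_isMaximal_of_surjective _ (fun s => ⟨g • s, inv_smul_smul g s⟩)⟩

/-- Let `M` be a finitely generated covariant `(G,R)`-module which is simple as a covariant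
module, over a finitely generated algebra `R` over an algebraically closed field, where `G` acts
by `k`-algebra automorphisms. Then the zero locus of the annihilator of `M` is a nonempty closed
`G`-stable subset of the maximal spectrum, minimal among nonempty closed `G`-stable subsets, and
the annihilator equals the intersection of the maximal ideals in this zero locus. -/
theorem zeroLocus_annihilator_of_simple_covariant
    (k : Type*) [Field k] [IsAlgClosed k]
    (R : Type*) [CommRing R] [Algebra k R] [Algebra.FiniteType k R]
    (G : Type*) [Group G] [MulSemiringAction G R] [SMulCommClass G k R]
    (M : Type*) [AddCommGroup M] [Module R M] [DistribMulAction G M]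
    (hcompat : ∀ (g : G) (r : R) (m : M), g • (r • m) = (g • r) • (g • m))
    (hfg : Module.Finite R M) (hnt : Nontrivial M)
    (hsimple : ∀ N : Submodule R M, (∀ g : G, ∀ n ∈ N, g • n ∈ N) → N = ⊥ ∨ N = ⊤)
    (I : Ideal R) (hI : I = (⊤ : Submodule R M).annihilator)
    (Z : Set (MaximalSpectrum R)) (hZ : Z = {m : MaximalSpectrum R | I ≤ m.asIdeal}) :
    Z.Nonempty ∧ IsClosed Z ∧ (∀ g : G, ∀ m ∈ Z, MaximalSpectrum.smul g m ∈ Z) ∧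
    (∀ Y : Set (MaximalSpectrum R), Y.Nonempty → IsClosed Y →
      (∀ g : G, ∀ m ∈ Y, MaximalSpectrum.smul g m ∈ Y) → Y ⊆ Z → Y = Z) ∧
    I = ⨅ m ∈ Z, (m : MaximalSpectrum R).asIdeal := by
  classical
  haveI : IsJacobsonRing R := isJacobsonRing_of_finiteType (A := k)
  -- I is a proper ideal
  have hIne : I ≠ ⊤ := by
    intro h
    obtain ⟨x, y, hxy⟩ := hnt
    have h1 : (1 : R) ∈ (⊤ : Submodule R M).annihilator := by rw [← hI, h]; trivial
    have hx := Submodule.mem_annihilator.mp h1 x trivial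
    have hy := Submodule.mem_annihilator.mp h1 y trivial
    rw [one_smul] at hx hy
    exact hxy (hx.trans hy.symm)
  -- I is G-stable
  have hIG : ∀ g : G, ∀ r ∈ I, g • r ∈ I := by
    intro g r hr
    rw [hI, Submodule.mem_annihilator]
    intro n _
    have h0 : r • (g⁻¹ • n) = 0 :=
      Submodule.mem_annihilator.mp (hI ▸ hr) (g⁻¹ • n) Submodule.mem_top
    have : (g • r) • n = g • (r • (g⁻¹ • n)) := by
      rw [hcompat, smul_inv_smul]
    rw [this, h0, smul_zero]
  -- membership in `smul g m`
  have hsmul_mem : ∀ (g : G) (m : MaximalSpectrum R) (r : R),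
      r ∈ (MaximalSpectrum.smul g m).asIdeal ↔ g⁻¹ • r ∈ m.asIdeal := by
    intro g m r; exact Iff.rfl
  -- Key lemma: any G-stable ideal contained in a maximal ideal containing I is ≤ I
  have keyA : ∀ J : Ideal R, (∀ g : G, ∀ r ∈ J, g • r ∈ J) →
      (∃ m : MaximalSpectrum R, J ≤ m.asIdeal ∧ I ≤ m.asIdeal) → J ≤ I := by
    rintro J hJG ⟨m, hJm, hIm⟩
    have hNG : ∀ g : G, ∀ n ∈ (J • ⊤ : Submodule R M), g • n ∈ (J • ⊤ : Submodule R M) := by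
      intro g n hn
      refine Submodule.smul_induction_on hn ?_ ?_
      · intro r hr x _
        rw [hcompat]
        exact Submodule.smul_mem_smul (hJG g r hr) trivial
      · intro x y hx hy
        rw [smul_add]; exact Submodule.add_mem _ hx hy
    rcases hsimple (J • ⊤) hNG with h | h
    · -- J • ⊤ = ⊥, so J annihilates M
      rw [hI]
      intro r hr
      rw [Submodule.mem_annihilator]
      intro n _
      have : r • n ∈ (J • ⊤ : Submodule R M) := Submodule.smul_mem_smul hr trivial
      rw [h] at this
      exact this
    · -- J • ⊤ = ⊤, contradiction via Nakayama
      exfalso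
      have hle : (⊤ : Submodule R M) ≤ J • ⊤ := h.ge
      obtain ⟨r, hr1, hr0⟩ :=
        Submodule.exists_sub_one_mem_and_smul_eq_zero_of_fg_of_le_smul J ⊤
          (Module.finite_def.mp hfg) hle
      have hrI : r ∈ I := by
        rw [hI, Submodule.mem_annihilator]
        intro n _; exact hr0 n trivial
      have h1m : (1 : R) ∈ m.asIdeal := by
        have : (1 : R) = r - (r - 1) := by ring
        rw [this]
        exact Ideal.sub_mem _ (hIm hrI) (hJm hr1)
      exact m.isMaximal.ne_top ((Ideal.eq_top_iff_one _).mpr h1m)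
  -- Jacobson: closed sets in MaxSpec are determined by their ideal of functions
  have hClosedY : ∀ Y : Set (MaximalSpectrum R), IsClosed Y →
      ∀ n : MaximalSpectrum R, (⨅ m ∈ Y, (m : MaximalSpectrum R).asIdeal) ≤ n.asIdeal →
      n ∈ Y := by
    intro Y hYc n hn
    obtain ⟨C, hCc, hCY⟩ := isClosed_induced_iff.mp hYc
    obtain ⟨A, hA⟩ := (PrimeSpectrum.isClosed_iff_zeroLocus_ideal C).mp hCc
    have hYmem : ∀ m : MaximalSpectrum R, m ∈ Y ↔ A ≤ m.asIdeal := by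
      intro m
      rw [← hCY, Set.mem_preimage, hA, PrimeSpectrum.mem_zeroLocus]
      exact SetLike.coe_subset_coe
    have hjac : A.jacobson ≤ ⨅ m ∈ Y, (m : MaximalSpectrum R).asIdeal := by
      refine le_iInf fun m => le_iInf fun hm => ?_
      exact sInf_le ⟨(hYmem m).mp hm, m.isMaximal⟩
    have hrad : A ≤ n.asIdeal := by
      have h1 : A.radical ≤ n.asIdeal := by
        rw [Ideal.radical_eq_jacobson]
        exact le_trans hjac hn
      exact le_trans Ideal.le_radical h1
    exact (hYmem n).mpr hrad
  -- infimum over a G-stable set is a G-stable ideal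
  have hInfG : ∀ Y : Set (MaximalSpectrum R),
      (∀ g : G, ∀ m ∈ Y, MaximalSpectrum.smul g m ∈ Y) →
      ∀ g : G, ∀ r ∈ (⨅ m ∈ Y, (m : MaximalSpectrum R).asIdeal),
        g • r ∈ (⨅ m ∈ Y, (m : MaximalSpectrum R).asIdeal) := by
    intro Y hYG g r hr
    simp only [Submodule.mem_iInf] at hr ⊢
    intro m hm
    have := hr (MaximalSpectrum.smul g⁻¹ m) (hYG g⁻¹ m hm)
    rw [hsmul_mem] at this
    rwa [inv_inv] at this
  -- Z is nonempty
  have hZne : Z.Nonempty := by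
    obtain ⟨m, hmmax, hIm⟩ := Ideal.exists_le_maximal I hIne
    exact ⟨⟨m, hmmax⟩, by rw [hZ]; exact hIm⟩
  -- Z is closed
  have hZclosed : IsClosed Z := by
    have : Z = MaximalSpectrum.toPrimeSpectrum ⁻¹' PrimeSpectrum.zeroLocus (I : Set R) := by
      ext m
      rw [hZ, Set.mem_preimage, PrimeSpectrum.mem_zeroLocus]
      show I ≤ m.asIdeal ↔ _
      exact SetLike.coe_subset_coe.symm
    rw [this]
    exact (PrimeSpectrum.isClosed_zeroLocus _).preimage continuous_induced_dom
  -- Z is G-stable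
  have hZG : ∀ g : G, ∀ m ∈ Z, MaximalSpectrum.smul g m ∈ Z := by
    intro g m hm
    rw [hZ] at hm ⊢
    intro r hr
    rw [hsmul_mem]
    exact hm (hIG g⁻¹ r hr)
  refine ⟨hZne, hZclosed, hZG, ?_, ?_⟩
  · -- minimality
    intro Y hYne hYc hYG hYZ
    set J : Ideal R := ⨅ m ∈ Y, (m : MaximalSpectrum R).asIdeal with hJ
    obtain ⟨m₀, hm₀⟩ := hYne
    have hJI : J ≤ I := by
      refine keyA J (hInfG Y hYG) ⟨m₀, ?_, ?_⟩
      · exact le_trans (iInf_le _ m₀) (iInf_le _ hm₀)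
      · have := hYZ hm₀; rw [hZ] at this; exact this
    refine Set.Subset.antisymm hYZ ?_
    intro n hn
    rw [hZ] at hn
    exact hClosedY Y hYc n (le_trans hJI hn)
  · -- I = ⨅
    refine le_antisymm ?_ ?_
    · refine le_iInf fun m => le_iInf fun hm => ?_
      rw [hZ] at hm; exact hm
    · obtain ⟨m₀, hm₀⟩ := hZne
      refine keyA _ (hInfG Z hZG) ⟨m₀, ?_, ?_⟩
      · exact le_trans (iInf_le _ m₀) (iInf_le _ hm₀)
      · rw [hZ] at hm₀; exact hm₀
end

section
/- Let k be an algebraically closed field, R a reduced finitely generated commutative k-algebra, and G a group acting on R by k-algebra automorphisms such that the induced action of G on the maximal spectrum of R is transitive. Let M be a finitely generated R-module which is a covariant (G,R)-module. Then M is a projective R-module. -/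
open Submodule Set

section Aux

variable {R : Type*} [CommRing R] {M : Type*} [AddCommGroup M] [Module R M]

/-- `z` generates `M` at the prime `p`, i.e. the images of `z` generate the localization of
`M` at `p`. -/
private def GenAt (p : Ideal R) {d : ℕ} (z : Fin d → M) : Prop :=
  ∀ y : M, ∃ u ∉ p, u • y ∈ Submodule.span R (Set.range z)

/-- At a minimal prime `q` of a reduced ring, if `x` generates `M` at `q` and no fewer than `n`
elements generate `M` at `q`, then any relation among the `x i` has coefficients in `q`. -/
private lemma auxA [IsReduced R] {q : Ideal R} (hq : q ∈ minimalPrimes R)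
    {n : ℕ} (x : Fin n → M) (hgen : GenAt q x)
    (hmin : ∀ (d : ℕ) (z : Fin d → M), GenAt q z → n ≤ d)
    (w : Fin n → R) (hw : ∑ i, w i • x i = 0) (i : Fin n) : w i ∈ q := by
  classical
  haveI hqp : q.IsPrime := hq.1.1
  set S := q.primeCompl with hS
  let F := Localization.AtPrime q
  -- `F` is a field since `q` is a minimal prime of a reduced ring.
  have hfield : IsField F := by
    rw [IsLocalRing.isField_iff_maximalIdeal_eq, eq_bot_iff]
    intro a ha
    have hnil : a ∈ nilradical F := by
      rw [nilradical_eq_sInf, Submodule.mem_sInf]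
      intro P hP
      haveI hPp : Ideal.IsPrime P := hP
      have h1 : Ideal.comap (algebraMap R F) P ≤ q := by
        intro b hb
        by_contra hbq
        exact hPp.ne_top
          (Ideal.eq_top_of_isUnit_mem P hb
            (IsLocalization.map_units F (⟨b, hbq⟩ : q.primeCompl)))
      have h2 : q ≤ Ideal.comap (algebraMap R F) P :=
        hq.2 ⟨Ideal.IsPrime.comap (algebraMap R F), bot_le⟩ h1
      have hcomap : Ideal.comap (algebraMap R F) P = q := le_antisymm h1 h2
      have hPm : P = IsLocalRing.maximalIdeal F := by
        calc P = Ideal.map (algebraMap R F) (Ideal.comap (algebraMap R F) P) :=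
              (IsLocalization.map_comap S F P).symm
          _ = Ideal.map (algebraMap R F) q := by rw [hcomap]
          _ = IsLocalRing.maximalIdeal F := Localization.AtPrime.map_eq_maximalIdeal
      rw [hPm]
      exact ha
    rw [nilradical_eq_zero] at hnil
    simpa using hnil
  letI : Field F := hfield.toField
  -- the localized module, as an `F`-vector space
  let Mq := LocalizedModule S M
  -- the linear combination map
  let ℓ : (Fin n → F) →ₗ[F] Mq :=
    Fintype.linearCombination F (fun i => LocalizedModule.mk (x i) 1)
  -- surjectivity of ℓ
  have key : ∀ v : M, v ∈ Submodule.span R (Set.range x) →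
      (LocalizedModule.mk v 1 : Mq) ∈
        Submodule.span F (Set.range fun i => (LocalizedModule.mk (x i) 1 : Mq)) := by
    intro v hv
    obtain ⟨c, hc⟩ := (mem_span_range_iff_exists_fun R).mp hv
    rw [← hc]
    have h2 : (LocalizedModule.mk (∑ j, c j • x j) 1 : Mq)
        = ∑ j, algebraMap R F (c j) • LocalizedModule.mk (x j) 1 := by
      rw [show (LocalizedModule.mk (∑ j, c j • x j) 1 : Mq)
          = (LocalizedModule.mkLinearMap S M) (∑ j, c j • x j) from rfl,
        map_sum (LocalizedModule.mkLinearMap S M)]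
      refine Finset.sum_congr rfl fun j _ => ?_
      rw [show (LocalizedModule.mkLinearMap S M) (c j • x j)
          = LocalizedModule.mk (c j • x j) 1 from rfl,
        ← LocalizedModule.smul'_mk, algebraMap_smul]
    rw [h2]
    exact Submodule.sum_mem _ fun j _ =>
      Submodule.smul_mem _ _ (Submodule.subset_span ⟨j, rfl⟩)
  have hspanF : Submodule.span F (Set.range fun i => (LocalizedModule.mk (x i) 1 : Mq)) = ⊤ := by
    rw [eq_top_iff]
    rintro z -
    induction' z using LocalizedModule.induction_on with y s
    obtain ⟨u, hu, hy⟩ := hgen y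
    have hyu := key _ hy
    have h3 : (LocalizedModule.mk y s : Mq)
        = Localization.mk 1 (⟨u, hu⟩ * s) • LocalizedModule.mk (u • y) 1 := by
      rw [LocalizedModule.mk_smul_mk, one_smul, mul_one,
        show u • y = (⟨u, hu⟩ : S) • y from rfl,
        LocalizedModule.mk_cancel_common_left (⟨u, hu⟩ : S) s y]
    rw [h3]
    exact Submodule.smul_mem _ _ hyu
  have hsurj : Function.Surjective ℓ := by
    rw [← LinearMap.range_eq_top, Fintype.range_linearCombination, hspanF]
  haveI : Module.Finite F Mq := Module.Finite.of_surjective ℓ hsurj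
  -- lower bound on the dimension
  have hdim : n ≤ Module.finrank F Mq := by
    set d := Module.finrank F Mq with hd
    let b : Module.Basis (Fin d) F Mq := Module.finBasis F Mq
    have hrep : ∀ z : Mq, ∃ (y : M) (s : S), z = LocalizedModule.mk y s := fun z =>
      LocalizedModule.induction_on (fun y s => ⟨y, s, rfl⟩) z
    choose y s hys using fun j => hrep (b j)
    refine hmin d y ?_
    intro v
    -- write `mk v 1` in terms of the basis, then clear denominators
    have hv : (LocalizedModule.mk v 1 : Mq)
        = ∑ j, (b.repr (LocalizedModule.mk v 1) j * Localization.mk 1 (s j))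
            • LocalizedModule.mk (y j) 1 := by
      conv_lhs => rw [← b.sum_repr (LocalizedModule.mk v 1)]
      refine Finset.sum_congr rfl fun j _ => ?_
      rw [hys j, mul_smul, LocalizedModule.mk_smul_mk, one_smul, mul_one]
    set c : Fin d → F := fun j => b.repr (LocalizedModule.mk v 1) j * Localization.mk 1 (s j)
      with hcdef
    obtain ⟨t, ht⟩ := IsLocalization.exist_integer_multiples_of_finite S c
    choose a ha using ht
    have hv2 : (LocalizedModule.mk ((t : R) • v) 1 : Mq)
        = LocalizedModule.mk (∑ j, a j • y j) 1 := by
      have h4 : (t : R) • (LocalizedModule.mk v 1 : Mq)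
          = ∑ j, ((t : R) • c j) • LocalizedModule.mk (y j) 1 := by
        rw [hv, Finset.smul_sum]
        refine Finset.sum_congr rfl fun j _ => ?_
        rw [← smul_assoc]
      rw [LocalizedModule.smul'_mk] at h4
      rw [h4, show (LocalizedModule.mk (∑ j, a j • y j) 1 : Mq)
          = (LocalizedModule.mkLinearMap S M) (∑ j, a j • y j) from rfl,
        map_sum (LocalizedModule.mkLinearMap S M)]
      refine Finset.sum_congr rfl fun j _ => ?_
      rw [← ha j, show (LocalizedModule.mkLinearMap S M) (a j • y j)
          = LocalizedModule.mk (a j • y j) 1 from rfl, ← LocalizedModule.smul'_mk,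
        algebraMap_smul]
    rw [LocalizedModule.mk_eq] at hv2
    obtain ⟨e, he⟩ := hv2
    simp only [one_smul] at he
    rw [Submonoid.smul_def, Submonoid.smul_def] at he
    refine ⟨(e : R) * (t : R), S.mul_mem e.2 t.2, ?_⟩
    rw [mul_smul, he, Finset.smul_sum]
    refine Submodule.sum_mem _ fun j _ => ?_
    rw [smul_smul]
    exact Submodule.smul_mem _ _ (Submodule.subset_span ⟨j, rfl⟩)
  -- injectivity of ℓ
  have hinj : Function.Injective ℓ := by
    rw [← LinearMap.ker_eq_bot]
    have h1 := LinearMap.finrank_range_add_finrank_ker ℓ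
    rw [LinearMap.range_eq_top.mpr hsurj, finrank_top, Module.finrank_pi, Fintype.card_fin] at h1
    have h5 : Module.finrank F (LinearMap.ker ℓ) = 0 := by omega
    exact Submodule.finrank_eq_zero.mp h5
  -- apply to the relation `w`
  have hℓw : ℓ (fun i => algebraMap R F (w i)) = 0 := by
    rw [show ℓ (fun i => algebraMap R F (w i))
        = ∑ i, algebraMap R F (w i) • LocalizedModule.mk (x i) 1 from rfl]
    have h6 : ∀ i : Fin n, algebraMap R F (w i) • (LocalizedModule.mk (x i) 1 : Mq)
        = LocalizedModule.mk (w i • x i) 1 := fun i => by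
      rw [algebraMap_smul, LocalizedModule.smul'_mk]
    simp_rw [h6]
    rw [show (∑ i, (LocalizedModule.mk (w i • x i) 1 : Mq))
        = ∑ i, (LocalizedModule.mkLinearMap S M) (w i • x i) from rfl,
      ← map_sum (LocalizedModule.mkLinearMap S M), hw]
    exact map_zero _
  have hzero : (fun i => algebraMap R F (w i)) = (0 : Fin n → F) := by
    apply hinj
    rw [hℓw, map_zero]
  have h7 : algebraMap R F (w i) = 0 := congr_fun hzero i
  obtain ⟨u, hu⟩ := (IsLocalization.map_eq_zero_iff S F _).mp h7
  have h8 : (u : R) * w i ∈ q := hu ▸ q.zero_mem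
  rcases hqp.mem_or_mem h8 with h | h
  · exact absurd h u.2
  · exact h

/-- Local freeness at a prime ideal, given generators with relations vanishing at all
minimal primes below it. -/
private lemma auxB [IsReduced R] {m : Ideal R} (hm : m.IsPrime)
    {n : ℕ} (x : Fin n → M) (hgen : GenAt m x)
    (hqker : ∀ q ∈ minimalPrimes R, q ≤ m → ∀ w : Fin n → R,
      ∑ i, w i • x i = 0 → ∀ i, w i ∈ q) :
    Module.Free (Localization.AtPrime m) (LocalizedModule m.primeCompl M) := by
  classical
  haveI := hm
  set S := m.primeCompl with hS
  let F := Localization.AtPrime m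
  let φ : (Fin n → R) →ₗ[R] M := Fintype.linearCombination R x
  let ψ := LocalizedModule.map S φ
  -- kernel vanishing
  have hker : ∀ w : Fin n → R, φ w = 0 → ∃ e : S, ∀ i, (e : R) * w i = 0 := by
    intro w hφw
    have hwsum : ∑ i, w i • x i = 0 := hφw
    have hwq : ∀ i, algebraMap R F (w i) = 0 := by
      intro i
      have hn : algebraMap R F (w i) ∈ nilradical F := by
        rw [nilradical_eq_sInf, Submodule.mem_sInf]
        intro P hP
        haveI hPp : Ideal.IsPrime P := hP
        have h1 : Ideal.comap (algebraMap R F) P ≤ m := by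
          intro b hb
          by_contra hbq
          exact hPp.ne_top
            (Ideal.eq_top_of_isUnit_mem P hb
              (IsLocalization.map_units F (⟨b, hbq⟩ : m.primeCompl)))
        obtain ⟨q₀, hq₀, hq₀le⟩ :=
          Ideal.exists_minimalPrimes_le (I := (⊥ : Ideal R))
            (J := Ideal.comap (algebraMap R F) P) bot_le
        have h2 : w i ∈ q₀ := hqker q₀ hq₀ (le_trans hq₀le h1) w hwsum i
        exact hq₀le h2
      rw [nilradical_eq_zero] at hn
      simpa using hn
    have h3 := fun i => (IsLocalization.map_eq_zero_iff S F _).mp (hwq i)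
    choose u hu using h3
    refine ⟨∏ i, u i, fun i => ?_⟩
    rw [show ((∏ j, u j : S) : R) = ∏ j, ((u j : S) : R) by simp,
      ← Finset.prod_erase_mul Finset.univ _ (Finset.mem_univ i), mul_assoc, hu i, mul_zero]
  have hinj : Function.Injective ψ := by
    rw [← LinearMap.ker_eq_bot, eq_bot_iff]
    intro z hz
    rw [LinearMap.mem_ker] at hz
    induction' z using LocalizedModule.induction_on with v t
    rw [show ψ (LocalizedModule.mk v t) = LocalizedModule.mk (φ v) t from
      LocalizedModule.map_mk S φ v t] at hz
    rw [show (0 : LocalizedModule S M) = LocalizedModule.mk 0 1 from (LocalizedModule.zero_mk 1).symm,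
      LocalizedModule.mk_eq] at hz
    obtain ⟨c, hc⟩ := hz
    simp only [one_smul, smul_zero] at hc
    have hφcv : φ ((c : R) • v) = 0 := by
      rw [map_smul]
      rw [show (c : R) • φ v = c • φ v from rfl, hc]
    obtain ⟨e, he⟩ := hker _ hφcv
    rw [Submodule.mem_bot, show (0 : LocalizedModule S (Fin n → R)) = LocalizedModule.mk 0 1
      from (LocalizedModule.zero_mk 1).symm, LocalizedModule.mk_eq]
    refine ⟨e * c, ?_⟩
    simp only [one_smul, smul_zero]
    funext i
    have h9 := he i
    simp only [Pi.smul_apply, smul_eq_mul] at h9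
    simp only [Pi.zero_apply, Pi.smul_apply, Submonoid.smul_def, Submonoid.coe_mul,
      smul_eq_mul, mul_assoc]
    exact h9
  have hsurjψ : Function.Surjective ψ := by
    intro z
    induction' z using LocalizedModule.induction_on with y t
    obtain ⟨u, hu, hy⟩ := hgen y
    obtain ⟨r, hr⟩ := (mem_span_range_iff_exists_fun R).mp hy
    refine ⟨LocalizedModule.mk r (⟨u, hu⟩ * t), ?_⟩
    rw [show ψ (LocalizedModule.mk r (⟨u, hu⟩ * t)) = LocalizedModule.mk (φ r) (⟨u, hu⟩ * t)
      from LocalizedModule.map_mk S φ r _]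
    rw [show φ r = ∑ i, r i • x i from rfl, hr,
      show u • y = (⟨u, hu⟩ : S) • y from rfl,
      LocalizedModule.mk_cancel_common_left (⟨u, hu⟩ : S) t y]
  haveI : Module.Free (Localization.AtPrime m) (LocalizedModule S (Fin n → R)) :=
    Module.free_of_isLocalizedModule S (LocalizedModule.mkLinearMap S (Fin n → R))
  exact Module.Free.of_equiv (LinearEquiv.ofBijective ψ ⟨hinj, hsurjψ⟩)

/-- In a Jacobson ring, any finite set generating a finite module at a prime also generates it
at some maximal ideal. -/
private lemma auxC [IsJacobsonRing R] [Module.Finite R M]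
    {q : Ideal R} (hq : q.IsPrime) {d : ℕ} (z : Fin d → M) (hgen : GenAt q z) :
    ∃ m : Ideal R, m.IsMaximal ∧ GenAt m z := by
  classical
  obtain ⟨N, y, hy⟩ := Module.Finite.exists_fin (R := R) (M := M)
  choose u hu hspan using fun j => hgen (y j)
  set f : R := ∏ j, u j with hf
  have hfq : f ∉ q := by
    have : f ∈ q.primeCompl := Submonoid.prod_mem q.primeCompl fun j _ => hu j
    exact this
  have hfgen : ∀ v : M, f • v ∈ Submodule.span R (Set.range z) := by
    have hle : Submodule.span R (Set.range y) ≤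
        (Submodule.span R (Set.range z)).comap (LinearMap.lsmul R M f) := by
      rw [Submodule.span_le]
      rintro _ ⟨j, rfl⟩
      simp only [SetLike.mem_coe, Submodule.mem_comap, LinearMap.lsmul_apply]
      rw [show f = (∏ i ∈ Finset.univ.erase j, u i) * u j from
        (Finset.prod_erase_mul _ _ (Finset.mem_univ j)).symm, mul_smul]
      exact Submodule.smul_mem _ _ (hspan j)
    intro v
    have hv : v ∈ Submodule.span R (Set.range y) := hy ▸ Submodule.mem_top
    exact hle hv
  have hfnil : f ∉ (⊥ : Ideal R).jacobson := by
    rw [← Ideal.radical_eq_jacobson]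
    intro hfr
    exact hfq (hq.radical_le_iff.mpr bot_le hfr)
  rw [Ideal.jacobson, Submodule.mem_sInf] at hfnil
  push_neg at hfnil
  obtain ⟨m, ⟨-, hm⟩, hfm⟩ := hfnil
  exact ⟨m, hm, fun v => ⟨f, hfm, hfgen v⟩⟩

/-- Transfer of generation along the group action. -/
private lemma auxD {G : Type*} [Group G] [MulSemiringAction G R] [DistribMulAction G M]
    (hcompat : ∀ (g : G) (r : R) (m : M), g • (r • m) = (g • r) • (g • m))
    (g : G) {m m' : Ideal R}
    (hg : Ideal.map (MulSemiringAction.toRingHom G R g) m = m')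
    {d : ℕ} (z : Fin d → M) (hgen : GenAt m z) : GenAt m' (fun j => g • z j) := by
  have hspan : ∀ v ∈ Submodule.span R (Set.range z),
      g • v ∈ Submodule.span R (Set.range fun j => g • z j) := by
    intro v hv
    induction hv using Submodule.span_induction with
    | mem v hv => obtain ⟨j, rfl⟩ := hv; exact Submodule.subset_span ⟨j, rfl⟩
    | zero => rw [smul_zero]; exact Submodule.zero_mem _
    | add a b _ _ ha hb => rw [smul_add]; exact Submodule.add_mem _ ha hb
    | smul r a _ hind => rw [hcompat]; exact Submodule.smul_mem _ _ hind
  intro y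
  obtain ⟨u, hu, hy⟩ := hgen (g⁻¹ • y)
  refine ⟨g • u, ?_, ?_⟩
  · intro hmem
    apply hu
    have hmap : Ideal.map (MulSemiringAction.toRingHom G R g⁻¹) m' = m := by
      rw [← hg, Ideal.map_map]
      have hcomp : (MulSemiringAction.toRingHom G R g⁻¹).comp
          (MulSemiringAction.toRingHom G R g) = RingHom.id R := by
        ext r
        simp [MulSemiringAction.toRingHom_apply]
      rw [hcomp, Ideal.map_id]
    have h1 : (MulSemiringAction.toRingHom G R g⁻¹) (g • u) ∈
        Ideal.map (MulSemiringAction.toRingHom G R g⁻¹) m' :=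
      Ideal.mem_map_of_mem _ hmem
    rw [hmap] at h1
    simpa [MulSemiringAction.toRingHom_apply] using h1
  · have h2 := hspan _ hy
    rw [hcompat] at h2
    rwa [smul_inv_smul] at h2

end Aux

/-- If `G` acts on a reduced finitely generated algebra `R` over an algebraically closed field
`k` by `k`-algebra automorphisms, transitively on the maximal spectrum, then every finitely
generated covariant `(G,R)`-module is projective over `R`. -/
theorem projective_of_transitive_covariant
    (k : Type*) [Field k] [IsAlgClosed k]
    (R : Type*) [CommRing R] [IsReduced R] [Algebra k R] [Algebra.FiniteType k R]
    (G : Type*) [Group G] [MulSemiringAction G R] [SMulCommClass G k R]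
    (htrans : ∀ m m' : MaximalSpectrum R,
      ∃ g : G, Ideal.map (MulSemiringAction.toRingHom G R g) m.asIdeal = m'.asIdeal)
    (M : Type*) [AddCommGroup M] [Module R M] [Module.Finite R M] [DistribMulAction G M]
    (hcompat : ∀ (g : G) (r : R) (m : M), g • (r • m) = (g • r) • (g • m)) :
    Module.Projective R M := by
  classical
  rcases subsingleton_or_nontrivial R with h | h
  · haveI : Subsingleton M := ⟨fun a b => by
      calc a = (1 : R) • a := (one_smul R a).symm
        _ = (0 : R) • a := by rw [Subsingleton.elim (1 : R) (0 : R)]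
        _ = 0 := zero_smul R a
        _ = (0 : R) • b := (zero_smul R b).symm
        _ = (1 : R) • b := by rw [Subsingleton.elim (0 : R) (1 : R)]
        _ = b := one_smul R b⟩
    infer_instance
  · haveI : IsJacobsonRing R := isJacobsonRing_of_finiteType (A := k)
    haveI : IsNoetherianRing R := Algebra.FiniteType.isNoetherianRing k R
    haveI : Module.FinitePresentation R M := Module.finitePresentation_of_finite R M
    obtain ⟨m₀, hm₀⟩ := Ideal.exists_maximal R
    have hSne : ∃ d : ℕ, ∃ z : Fin d → M, GenAt m₀ z := by
      obtain ⟨N, y, hy⟩ := Module.Finite.exists_fin (R := R) (M := M)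
      exact ⟨N, y, fun v => ⟨1, (Ideal.ne_top_iff_one m₀).mp hm₀.ne_top,
        by rw [one_smul]; exact hy ▸ Submodule.mem_top⟩⟩
    have hne : {d : ℕ | ∃ z : Fin d → M, GenAt m₀ z}.Nonempty := hSne
    set n := sInf {d : ℕ | ∃ z : Fin d → M, GenAt m₀ z} with hn
    obtain ⟨x₀, hx₀⟩ : ∃ z : Fin n → M, GenAt m₀ z := Nat.sInf_mem hne
    have hmin₀ : ∀ (d : ℕ) (z : Fin d → M), GenAt m₀ z → n ≤ d :=
      fun d z hz => Nat.sInf_le ⟨z, hz⟩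
    apply Module.projective_of_localization_maximal
    intro I hI
    haveI := hI
    obtain ⟨g, hg⟩ := htrans ⟨m₀, hm₀⟩ ⟨I, hI⟩
    have hx : GenAt I (fun i => g • x₀ i) := auxD hcompat g hg x₀ hx₀
    have hqker : ∀ q ∈ minimalPrimes R, q ≤ I → ∀ w : Fin n → R,
        (∑ i, w i • g • x₀ i) = 0 → ∀ i, w i ∈ q := by
      intro q hq hqI w hw i
      haveI : q.IsPrime := hq.1.1
      refine auxA hq _ (fun y => ?_) (fun d z hz => ?_) w hw i
      · obtain ⟨u, hu, hspan⟩ := hx y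
        exact ⟨u, fun h' => hu (hqI h'), hspan⟩
      · obtain ⟨m₁, hm₁, hzm₁⟩ := auxC ‹q.IsPrime› z hz
        obtain ⟨g', hg'⟩ := htrans ⟨m₁, hm₁⟩ ⟨m₀, hm₀⟩
        exact hmin₀ d _ (auxD hcompat g' hg' z hzm₁)
    haveI hfree := auxB hI.isPrime (fun i => g • x₀ i) hx hqker
    infer_instance
end

section
/- Let k be an algebraically closed field, R a reduced finitely generated commutative k-algebra, and G a group acting on R by k-algebra automorphisms such that the induced action of G on the maximal spectrum of R is transitive. Let M be a finitely generated R-module which is a covariant (G,R)-module. Then the natural map from M to the product over all maximal ideals m of R of the fibers M/(m•M), sending x to the family of its images, is injective. -/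
section Transport

variable {R : Type*} [CommRing R] {G : Type*} [Group G] [MulSemiringAction G R]
  {M : Type*} [AddCommGroup M] [Module R M] [DistribMulAction G M]

/-- The raw transport map on localized modules induced by `g`. -/
noncomputable def covariantLocalizedMap
    (hcompat : ∀ (g : G) (r : R) (m : M), g • (r • m) = (g • r) • (g • m))
    (g : G) (m1 m2 : Ideal R) [m1.IsPrime] [m2.IsPrime]
    (hmem : ∀ r : R, r ∈ m1.primeCompl ↔ g • r ∈ m2.primeCompl)
    (z : LocalizedModule m1.primeCompl M) : LocalizedModule m2.primeCompl M :=
  z.liftOn (fun p => LocalizedModule.mk (g • p.1)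
      ⟨g • (p.2 : R), (hmem _).mp p.2.2⟩)
    (by
      rintro ⟨x, s⟩ ⟨x', s'⟩ h
      have hmk : LocalizedModule.mk (S := m1.primeCompl) x s = LocalizedModule.mk x' s' :=
        LocalizedModule.mk_eq.mpr h
      obtain ⟨u, hu⟩ := LocalizedModule.mk_eq.mp hmk
      refine LocalizedModule.mk_eq.mpr ⟨⟨g • (u : R), (hmem _).mp u.2⟩, ?_⟩
      simp only [Submonoid.smul_def] at hu ⊢
      simp only [← hcompat]
      exact congrArg (g • ·) hu)

theorem covariantLocalizedMap_mk
    (hcompat : ∀ (g : G) (r : R) (m : M), g • (r • m) = (g • r) • (g • m))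
    (g : G) (m1 m2 : Ideal R) [m1.IsPrime] [m2.IsPrime]
    (hmem : ∀ r : R, r ∈ m1.primeCompl ↔ g • r ∈ m2.primeCompl) (x : M) (s : m1.primeCompl) :
    covariantLocalizedMap hcompat g m1 m2 hmem (LocalizedModule.mk x s) =
      LocalizedModule.mk (g • x) ⟨g • (s : R), (hmem _).mp s.2⟩ :=
  LocalizedModule.liftOn_mk _ x s

attribute [local instance] RingHomInvPair.of_ringEquiv in
theorem free_localized_transport
    (hcompat : ∀ (g : G) (r : R) (m : M), g • (r • m) = (g • r) • (g • m))
    (g : G) (m1 m2 : Ideal R) [m1.IsPrime] [m2.IsPrime]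
    (hmap : Ideal.map (MulSemiringAction.toRingHom G R g) m1 = m2)
    (h : Module.Free (Localization.AtPrime m1) (LocalizedModule m1.primeCompl M)) :
    Module.Free (Localization.AtPrime m2) (LocalizedModule m2.primeCompl M) := by
  have hmem : ∀ r : R, r ∈ m1 ↔ g • r ∈ m2 := by
    intro r
    constructor
    · intro hr
      rw [← hmap]
      exact Ideal.mem_map_of_mem _ hr
    · intro hr
      have h2 : Ideal.map (MulSemiringAction.toRingHom G R g⁻¹) m2 = m1 := by
        rw [← hmap, Ideal.map_map]
        have : (MulSemiringAction.toRingHom G R g⁻¹).comp (MulSemiringAction.toRingHom G R g) =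
            RingHom.id R := by
          ext r; simp [MulSemiringAction.toRingHom_apply]
        rw [this, Ideal.map_id]
      have := Ideal.mem_map_of_mem (MulSemiringAction.toRingHom G R g⁻¹) hr
      rw [h2] at this
      simpa [MulSemiringAction.toRingHom_apply] using this
  have hmem2 : ∀ r : R, r ∈ m2 ↔ g⁻¹ • r ∈ m1 := by
    intro r
    rw [hmem (g⁻¹ • r), smul_inv_smul]
  have hmem' : ∀ r : R, r ∈ m1.primeCompl ↔ g • r ∈ m2.primeCompl := fun r => not_congr (hmem r)
  set σ : R ≃+* R := MulSemiringAction.toRingEquiv G R g with hσ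
  have hsub : Submonoid.map σ.toMonoidHom m1.primeCompl = m2.primeCompl := by
    ext x
    constructor
    · rintro ⟨r, hr, rfl⟩
      exact (hmem' r).mp hr
    · intro hx
      refine ⟨g⁻¹ • x, ?_, by simp [hσ, MulSemiringAction.toRingEquiv]⟩
      exact (hmem' _).mpr (by simpa using hx)
  letI e₁ : Localization.AtPrime m1 ≃+* Localization.AtPrime m2 :=
    IsLocalization.ringEquivOfRingEquiv _ _ σ hsub
  have hmem2' : ∀ r : R, r ∈ m2.primeCompl ↔ g⁻¹ • r ∈ m1.primeCompl :=
    fun r => not_congr (hmem2 r)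
  let F := covariantLocalizedMap hcompat g m1 m2 hmem'
  let Finv := covariantLocalizedMap hcompat g⁻¹ m2 m1 hmem2'
  have hFmk : ∀ (x : M) (s : m1.primeCompl), F (LocalizedModule.mk x s) =
      LocalizedModule.mk (g • x) ⟨g • (s : R), (hmem' _).mp s.2⟩ :=
    covariantLocalizedMap_mk hcompat g m1 m2 hmem'
  have hFinvmk : ∀ (x : M) (s : m2.primeCompl), Finv (LocalizedModule.mk x s) =
      LocalizedModule.mk (g⁻¹ • x) ⟨g⁻¹ • (s : R), (hmem2' _).mp s.2⟩ :=
    covariantLocalizedMap_mk hcompat g⁻¹ m2 m1 hmem2'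
  have hleft : ∀ z, Finv (F z) = z := by
    intro z
    induction z using LocalizedModule.induction_on with
    | _ x s =>
      rw [hFmk, hFinvmk]
      congr 1
      · simp
      · ext; simp
  have hright : ∀ z, F (Finv z) = z := by
    intro z
    induction z using LocalizedModule.induction_on with
    | _ x s =>
      rw [hFinvmk, hFmk]
      congr 1
      · simp
      · ext; simp
  have hadd : ∀ z w, F (z + w) = F z + F w := by
    intro z w
    induction z, w using LocalizedModule.induction_on₂ with
    | _ x s x' s' =>
      rw [LocalizedModule.mk_add_mk, hFmk, hFmk, hFmk, LocalizedModule.mk_add_mk]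
      congr 1
      · simp only [Submonoid.smul_def, smul_add]
        simp only [← hcompat]
      · ext
        simp only [Submonoid.coe_mul]
        rw [smul_mul']
  have hsmul : ∀ (a : Localization.AtPrime m1) (z : LocalizedModule m1.primeCompl M),
      F (a • z) = e₁ a • F z := by
    intro a z
    induction a using Localization.induction_on with
    | _ p =>
      obtain ⟨r, s⟩ := p
      induction z using LocalizedModule.induction_on with
      | _ x t =>
        rw [LocalizedModule.mk_smul_mk, hFmk]
        have he : e₁ (Localization.mk r s) =
            Localization.mk (σ r) ⟨σ s, hsub ▸ Submonoid.apply_coe_mem_map σ.toMonoidHom m1.primeCompl s⟩ := by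
          rw [Localization.mk_eq_mk', Localization.mk_eq_mk']
          exact IsLocalization.ringEquivOfRingEquiv_mk' hsub r s
        rw [he, hFmk, LocalizedModule.mk_smul_mk]
        congr 1
        · show g • (r • x) = σ r • (g • x)
          rw [hcompat]; rfl
        · ext
          simp only [Submonoid.coe_mul]
          show g • ((s : R) * (t : R)) = σ (s : R) * (g • (t : R))
          rw [smul_mul']; rfl
  let e₂ : LocalizedModule m1.primeCompl M ≃ₛₗ[RingHomClass.toRingHom e₁]
      LocalizedModule m2.primeCompl M :=
    { toFun := F
      invFun := Finv
      left_inv := hleft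
      right_inv := hright
      map_add' := hadd
      map_smul' := hsmul }
  exact (Module.Free.iff_of_equiv e₂).mp h

end Transport

/-- If `G` acts on a reduced finitely generated algebra `R` over an algebraically closed field
`k` by `k`-algebra automorphisms, transitively on the maximal spectrum, and `M` is a finitely
generated covariant `(G,R)`-module, then the natural map from `M` to the product of its fibers
`M/(m•M)` over all maximal ideals `m` is injective. -/
theorem injective_to_fibers_of_transitive_covariant
    (k : Type*) [Field k] [IsAlgClosed k]
    (R : Type*) [CommRing R] [IsReduced R] [Algebra k R] [Algebra.FiniteType k R]
    (G : Type*) [Group G] [MulSemiringAction G R] [SMulCommClass G k R]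
    (htrans : ∀ m m' : MaximalSpectrum R,
      ∃ g : G, Ideal.map (MulSemiringAction.toRingHom G R g) m.asIdeal = m'.asIdeal)
    (M : Type*) [AddCommGroup M] [Module R M] [Module.Finite R M] [DistribMulAction G M]
    (hcompat : ∀ (g : G) (r : R) (m : M), g • (r • m) = (g • r) • (g • m)) :
    Function.Injective (fun x : M => fun m : MaximalSpectrum R =>
      (Submodule.Quotient.mk x : M ⧸ (m.asIdeal • ⊤ : Submodule R M))) := by
  rcases subsingleton_or_nontrivial R with hR | hR
  · haveI : Subsingleton M := Module.subsingleton R M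
    intro x y _; exact Subsingleton.elim x y
  haveI : IsNoetherianRing R := Algebra.FiniteType.isNoetherianRing k R
  haveI : IsJacobsonRing R := isJacobsonRing_of_finiteType (A := k)
  haveI : Module.FinitePresentation R M := Module.finitePresentation_of_finite R M
  -- Jacobson radical is zero
  have hjac : (⊥ : Ideal R).jacobson = ⊥ := by
    have h1 : (⊥ : Ideal R).radical = ⊥ := nilradical_eq_zero R
    exact IsJacobsonRing.out' _ (Ideal.radical_eq_iff.mp h1)
  -- a minimal prime lies in the free locus
  obtain ⟨mx, hmx⟩ := Ideal.exists_maximal R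
  obtain ⟨p, hp, -⟩ := Ideal.exists_minimalPrimes_le (J := mx) bot_le
  haveI hpprime : p.IsPrime := hp.1.1
  have hfield : IsField (Localization.AtPrime p) := by
    rw [IsLocalRing.isField_iff_maximalIdeal_eq]
    have hred : IsReduced (Localization.AtPrime p) := inferInstance
    have hnil : nilradical (Localization.AtPrime p) = 0 := nilradical_eq_zero _
    have hle : IsLocalRing.maximalIdeal (Localization.AtPrime p) ≤
        nilradical (Localization.AtPrime p) := by
      rw [nilradical_eq_sInf]
      refine le_sInf ?_
      rintro q hq
      haveI : q.IsPrime := hq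
      have h1 : Ideal.comap (algebraMap R (Localization.AtPrime p)) q ≤ p := by
        intro x hx
        by_contra hxp
        exact hq.ne_top (Ideal.eq_top_of_isUnit_mem _ hx
          (IsLocalization.map_units (Localization.AtPrime p) (⟨x, hxp⟩ : p.primeCompl)))
      have h2 : p ≤ Ideal.comap (algebraMap R (Localization.AtPrime p)) q :=
        hp.2 ⟨Ideal.IsPrime.comap _, bot_le⟩ h1
      calc IsLocalRing.maximalIdeal (Localization.AtPrime p)
          = Ideal.map (algebraMap R (Localization.AtPrime p)) p :=
            (Localization.AtPrime.map_eq_maximalIdeal).symm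
        _ ≤ Ideal.map (algebraMap R (Localization.AtPrime p))
            (Ideal.comap (algebraMap R (Localization.AtPrime p)) q) := Ideal.map_mono h2
        _ ≤ q := Ideal.map_comap_le
    rw [hnil] at hle
    exact le_bot_iff.mp hle
  have hpfree : Module.Free (Localization.AtPrime p) (LocalizedModule p.primeCompl M) := by
    letI := hfield.toField
    infer_instance
  -- some maximal ideal is in the free locus
  have hmax1 : ∃ m1 : MaximalSpectrum R,
      Module.Free (Localization.AtPrime m1.asIdeal)
        (LocalizedModule m1.asIdeal.primeCompl M) := by
    by_contra hcon
    push_neg at hcon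
    obtain ⟨J, hJ⟩ := (PrimeSpectrum.isClosed_iff_zeroLocus_ideal _).mp
      (Module.isOpen_freeLocus (R := R) (M := M)).isClosed_compl
    have hJle : J ≤ (⊥ : Ideal R).jacobson := by
      rw [Ideal.jacobson]
      refine le_sInf ?_
      rintro m ⟨-, hm⟩
      have hnotfree : (⟨m, hm.isPrime⟩ : PrimeSpectrum R) ∈ (Module.freeLocus R M)ᶜ := by
        intro hmem
        exact hcon ⟨m, hm⟩ (Module.mem_freeLocus.mp hmem)
      rw [hJ] at hnotfree
      exact hnotfree
    rw [hjac, le_bot_iff] at hJle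
    subst hJle
    have : (⟨p, hpprime⟩ : PrimeSpectrum R) ∈ (Module.freeLocus R M)ᶜ := by
      rw [hJ]
      simp [PrimeSpectrum.zeroLocus]
    exact this (Module.mem_freeLocus.mpr hpfree)
  obtain ⟨m1, hm1⟩ := hmax1
  -- every maximal ideal is in the free locus, hence M is projective
  have hproj : Module.Projective R M := by
    apply Module.projective_of_localization_maximal
    intro I hI
    haveI : I.IsPrime := hI.isPrime
    obtain ⟨g, hg⟩ := htrans m1 ⟨I, hI⟩
    haveI := free_localized_transport hcompat g m1.asIdeal I hg hm1
    exact Module.Projective.of_free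
  obtain ⟨s, hs⟩ := Module.projective_def.mp hproj
  -- the key: kernel is zero
  have hker : ∀ x : M, (∀ m : MaximalSpectrum R, x ∈ (m.asIdeal • ⊤ : Submodule R M)) → x = 0 := by
    intro x hx
    have hsx : ∀ m : MaximalSpectrum R, s x ∈ (m.asIdeal • ⊤ : Submodule R (M →₀ R)) := by
      intro m
      have := Submodule.mem_map_of_mem (f := s) (hx m)
      rw [Submodule.map_smul''] at this
      exact Submodule.smul_mono le_rfl le_top this
    have hcoord : ∀ (a : M) (m : MaximalSpectrum R), s x a ∈ m.asIdeal := by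
      intro a m
      refine Submodule.smul_induction_on (hsx m) ?_ ?_
      · intro r hr n _
        simpa using Ideal.mul_mem_right _ _ hr
      · intro v w hv hw
        simpa using Ideal.add_mem _ hv hw
    have hzero : s x = 0 := by
      ext a
      have : s x a ∈ (⊥ : Ideal R).jacobson := by
        rw [Ideal.jacobson]
        refine Submodule.mem_sInf.mpr ?_
        rintro m ⟨-, hm⟩
        exact hcoord a ⟨m, hm⟩
      rw [hjac] at this
      simpa using this
    have := hs x
    rw [hzero] at this
    simpa using this.symm
  intro x y hxy
  have hsub : ∀ m : MaximalSpectrum R, x - y ∈ (m.asIdeal • ⊤ : Submodule R M) := by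
    intro m
    rw [← Submodule.Quotient.eq]
    exact congrFun hxy m
  have := hker (x - y) hsub
  exact sub_eq_zero.mp this
end

section
/- Let k be an algebraically closed field, R a finitely generated commutative k-algebra, and G a group acting on R by k-algebra automorphisms such that the induced action of G on the maximal spectrum of R is transitive. Let M be a finitely generated R-module which is a covariant (G,R)-module. If there exists a maximal ideal m₀ of R with M/(m₀•M) = 0, then M = 0. -/
/-- If `G` acts on a finitely generated algebra `R` over an algebraically closed field `k` by
`k`-algebra automorphisms, transitively on the maximal spectrum, `M` is a finitely generated
covariant `(G,R)`-module, and some fiber `M/(m₀•M)` vanishes, then `M = 0`. -/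
theorem subsingleton_of_fiber_zero_of_transitive
    (k : Type*) [Field k] [IsAlgClosed k]
    (R : Type*) [CommRing R] [Algebra k R] [Algebra.FiniteType k R]
    (G : Type*) [Group G] [MulSemiringAction G R] [SMulCommClass G k R]
    (htrans : ∀ m m' : MaximalSpectrum R,
      ∃ g : G, Ideal.map (MulSemiringAction.toRingHom G R g) m.asIdeal = m'.asIdeal)
    (M : Type*) [AddCommGroup M] [Module R M] [Module.Finite R M] [DistribMulAction G M]
    (hcompat : ∀ (g : G) (r : R) (m : M), g • (r • m) = (g • r) • (g • m))
    (m₀ : MaximalSpectrum R)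
    (hfiber : Subsingleton (M ⧸ (m₀.asIdeal • ⊤ : Submodule R M))) :
    Subsingleton M := by
  have h0 : m₀.asIdeal • (⊤ : Submodule R M) = ⊤ :=
    Submodule.Quotient.subsingleton_iff.mp hfiber
  -- every fiber vanishes
  have hall : ∀ m : MaximalSpectrum R, m.asIdeal • (⊤ : Submodule R M) = ⊤ := by
    intro m
    obtain ⟨g, hg⟩ := htrans m₀ m
    rw [eq_top_iff]
    intro x _
    have hx : g⁻¹ • x ∈ m₀.asIdeal • (⊤ : Submodule R M) := by
      rw [h0]; trivial
    have key : ∀ y ∈ m₀.asIdeal • (⊤ : Submodule R M),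
        g • y ∈ m.asIdeal • (⊤ : Submodule R M) := by
      intro y hy
      refine Submodule.smul_induction_on hy ?_ ?_
      · intro r hr n _
        rw [hcompat]
        refine Submodule.smul_mem_smul ?_ trivial
        rw [← hg]
        exact Ideal.mem_map_of_mem (MulSemiringAction.toRingHom G R g) hr
      · intro y z hy hz
        rw [smul_add]
        exact Submodule.add_mem _ hy hz
    have := key _ hx
    rwa [smul_inv_smul] at this
  -- annihilator is ⊤
  have hann : Module.annihilator R M = ⊤ := by
    by_contra h
    obtain ⟨m, hm, hle⟩ := Ideal.exists_le_maximal _ h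
    obtain ⟨r, hr1, hr0⟩ :=
      Submodule.exists_sub_one_mem_and_smul_eq_zero_of_fg_of_le_smul m
        (⊤ : Submodule R M) (Module.Finite.fg_top) (le_of_eq (hall ⟨m, hm⟩).symm)
    have hrann : r ∈ Module.annihilator R M :=
      Module.mem_annihilator.mpr fun x => hr0 x trivial
    have : (1 : R) ∈ m := by
      have := m.add_mem (hle hrann) (m.neg_mem hr1)
      simpa using this
    exact hm.ne_top (Ideal.eq_top_of_isUnit_mem _ this isUnit_one)
  refine ⟨fun a b => ?_⟩
  have h1 : (1 : R) ∈ Module.annihilator R M := hann ▸ trivial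
  have := Module.mem_annihilator.mp h1
  calc a = (1:R) • a := (one_smul R a).symm
    _ = 0 := this a
    _ = (1:R) • b := (this b).symm
    _ = b := one_smul R b
end

section
/- Let k be a field, R a reduced finitely generated commutative k-algebra, and M an R-module. Let (mᵢ)_{i∈I} be a family of elements of M such that, for every maximal ideal m of R, the images of the mᵢ in the fiber M/(m•M) are linearly independent over the residue field R/m. Then the family (mᵢ)_{i∈I} is linearly independent over R. -/
/-!
A relation `∑ gᵢ • vᵢ = 0` over `R` reduces, in the fiber at a maximal ideal `m`, to a relation
over `R/m`, so fiberwise independence puts every `gᵢ` in every maximal ideal, i.e. in the Jacobson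
radical. For a reduced Jacobson ring the Jacobson radical is the nilradical, which is zero.
-/

section

variable {R M ι : Type*} [CommRing R] [AddCommGroup M] [Module R M]

theorem Ideal.jacobson_bot_eq_bot_of_isReduced [IsJacobsonRing R] [IsReduced R] :
    (⊥ : Ideal R).jacobson = ⊥ := by
  rw [← Ideal.radical_eq_jacobson]
  exact nilradical_eq_zero R

theorem coeff_mem_of_linearIndependent_quotient_smul_top {I : Ideal R} {v : ι → M}
    (hv : LinearIndependent (R ⧸ I)
      (fun i => (Submodule.Quotient.mk (v i) : M ⧸ (I • ⊤ : Submodule R M))))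
    {s : Finset ι} {g : ι → R} (hg : ∑ j ∈ s, g j • v j = 0) {i : ι} (hi : i ∈ s) :
    g i ∈ I := by
  have hrel : ∑ j ∈ s, Ideal.Quotient.mk I (g j) •
      (Submodule.Quotient.mk (v j) : M ⧸ (I • ⊤ : Submodule R M)) = 0 := by
    have h := congr_arg (I • ⊤ : Submodule R M).mkQ hg
    rwa [map_sum, map_zero] at h
  exact Ideal.Quotient.eq_zero_iff_mem.mp (linearIndependent_iff'.mp hv s _ hrel i hi)

theorem linearIndependent_of_linearIndependent_fiber (hR : (⊥ : Ideal R).jacobson = ⊥)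
    {v : ι → M}
    (hfib : ∀ m : MaximalSpectrum R, LinearIndependent (R ⧸ m.asIdeal)
      (fun i => (Submodule.Quotient.mk (v i) : M ⧸ (m.asIdeal • ⊤ : Submodule R M)))) :
    LinearIndependent R v := by
  refine linearIndependent_iff'.mpr fun s g hg i hi => ?_
  have hjac : g i ∈ (⊥ : Ideal R).jacobson := Ideal.mem_sInf.mpr fun {m} hm =>
    coeff_mem_of_linearIndependent_quotient_smul_top (hfib ⟨m, hm.2⟩) hg hi
  rwa [hR, Ideal.mem_bot] at hjac

end

/-- If `R` is a reduced finitely generated algebra over a field and `(mᵢ)` is a family of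
elements of an `R`-module `M` whose images in each fiber `M/(m•M)` (at every maximal ideal `m`)
are linearly independent over the residue field `R/m`, then the family is linearly independent
over `R`. -/
theorem linearIndependent_of_fiberwise_linearIndependent
    (k : Type*) [Field k]
    (R : Type*) [CommRing R] [IsReduced R] [Algebra k R] [Algebra.FiniteType k R]
    (M : Type*) [AddCommGroup M] [Module R M]
    (ι : Type*) (v : ι → M)
    (hfib : ∀ m : MaximalSpectrum R, LinearIndependent (R ⧸ m.asIdeal)
      (fun i => (Submodule.Quotient.mk (v i) : M ⧸ (m.asIdeal • ⊤ : Submodule R M)))) :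
    LinearIndependent R v :=
  have : IsJacobsonRing R := isJacobsonRing_of_finiteType (A := k)
  linearIndependent_of_linearIndependent_fiber Ideal.jacobson_bot_eq_bot_of_isReduced hfib
end

section
/- Let R be a commutative ring, M a finite free R-module, and m a maximal ideal of R. Let ξ₁, …, ξₙ be elements of M whose images in the fiber M/(m•M) form a basis over the residue field R/m. Then there exists f ∈ R with f ∉ m such that the images of ξ₁, …, ξₙ in the localized module M_f form a basis of M_f over the localization R_f. -/
/-- If `M` is a finite free module over a commutative ring `R`, `m` is a maximal ideal of `R`,
and `ξ₁, …, ξₙ` are elements of `M` whose images in the fiber `M/(m•M)` form a basis over the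
residue field `R/m`, then there exists `f ∉ m` such that the images of the `ξᵢ` form a basis of
the localized module `M_f` over the localization `R_f`. -/
theorem exists_localization_basis_of_fiber_basis_of_free
    (R : Type*) [CommRing R]
    (M : Type*) [AddCommGroup M] [Module R M] [Module.Free R M] [Module.Finite R M]
    (m : Ideal R) (hm : m.IsMaximal) (n : ℕ) (ξ : Fin n → M)
    (b : Module.Basis (Fin n) (R ⧸ m) (M ⧸ (m • ⊤ : Submodule R M)))
    (hb : ∀ i, b i = Submodule.Quotient.mk (ξ i)) :
    ∃ f : R, f ∉ m ∧
      ∃ c : Module.Basis (Fin n) (Localization.Away f) (LocalizedModule (Submonoid.powers f) M),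
        ∀ i, c i = LocalizedModule.mkLinearMap (Submonoid.powers f) M (ξ i) := by
  classical
  letI : Field (R ⧸ m) := Ideal.Quotient.field m
  set κ := Module.Free.ChooseBasisIndex R M with hκ
  let e : Module.Basis κ R M := Module.Free.chooseBasis R M
  have hmk : Function.Surjective (algebraMap R (R ⧸ m)) := by
    rw [Ideal.Quotient.algebraMap_eq]; exact Ideal.Quotient.mk_surjective
  -- the map from M to the free module over the residue field
  let φ : M →ₗ[R] (κ →₀ R ⧸ m) :=
    (Finsupp.mapRange.linearMap (Algebra.linearMap R (R ⧸ m))) ∘ₗ e.repr.toLinearMap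
  have hφ : ∀ (x : M) (i : κ), φ x i = Ideal.Quotient.mk m (e.repr x i) := by
    intro x i
    simp [φ, Ideal.Quotient.algebraMap_eq]
  have hker : m • (⊤ : Submodule R M) ≤ LinearMap.ker φ := by
    rw [Submodule.smul_le]
    intro r hr x _
    rw [LinearMap.mem_ker, map_smul, ← algebraMap_smul (R ⧸ m) r (φ x),
      Ideal.Quotient.algebraMap_eq, Ideal.Quotient.eq_zero_iff_mem.mpr hr, zero_smul]
  have hker' : LinearMap.ker φ ≤ m • (⊤ : Submodule R M) := by
    intro x hx
    rw [LinearMap.mem_ker] at hx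
    have hx' : ∀ i : κ, e.repr x i ∈ m := by
      intro i
      have : φ x i = 0 := by rw [hx]; rfl
      rw [hφ] at this
      exact Ideal.Quotient.eq_zero_iff_mem.mp this
    have hx2 : x = ∑ i : κ, e.repr x i • e i := (e.sum_repr x).symm
    rw [hx2]
    exact Submodule.sum_mem _ fun i _ => Submodule.smul_mem_smul (hx' i) Submodule.mem_top
  let ψ : (M ⧸ (m • ⊤ : Submodule R M)) →ₗ[R] (κ →₀ R ⧸ m) :=
    Submodule.liftQ _ φ hker
  have hψsurj : Function.Surjective ψ := by
    intro y
    obtain ⟨z, hz⟩ := (Finsupp.mapRange_surjective (Algebra.linearMap R (R ⧸ m)) (map_zero _)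
      hmk) y
    exact ⟨Submodule.Quotient.mk (e.repr.symm z), by
      rw [Submodule.liftQ_apply]
      show Finsupp.mapRange.linearMap (Algebra.linearMap R (R ⧸ m)) (e.repr (e.repr.symm z)) = y
      rw [e.repr.apply_symm_apply]
      exact hz⟩
  have hψinj : Function.Injective ψ := by
    rw [← LinearMap.ker_eq_bot]
    exact Submodule.ker_liftQ_eq_bot _ _ _ hker'
  let E : (M ⧸ (m • ⊤ : Submodule R M)) ≃ₗ[R ⧸ m] (κ →₀ R ⧸ m) :=
    (LinearEquiv.ofBijective ψ ⟨hψinj, hψsurj⟩).extendScalarsOfSurjective hmk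
  let ebar : Module.Basis κ (R ⧸ m) (M ⧸ (m • ⊤ : Submodule R M)) := Module.Basis.ofRepr E
  have hebar : ∀ (x : M) (i : κ),
      ebar.repr (Submodule.Quotient.mk x) i = Ideal.Quotient.mk m (e.repr x i) := by
    intro x i
    show ψ (Submodule.Quotient.mk x) i = _
    rw [Submodule.liftQ_apply]
    exact hφ x i
  -- index equivalence
  let σ : κ ≃ Fin n := ebar.indexEquiv b
  let e' : Module.Basis (Fin n) R M := e.reindex σ
  let ebar' : Module.Basis (Fin n) (R ⧸ m) (M ⧸ (m • ⊤ : Submodule R M)) := ebar.reindex σ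
  have hebar' : ∀ (x : M) (i : Fin n),
      ebar'.repr (Submodule.Quotient.mk x) i = Ideal.Quotient.mk m (e'.repr x i) := by
    intro x i
    rw [Module.Basis.repr_reindex_apply, Module.Basis.repr_reindex_apply, hebar]
  -- the determinant
  set A : Matrix (Fin n) (Fin n) R := e'.toMatrix ξ with hA
  refine ⟨A.det, ?_, ?_⟩
  · -- A.det ∉ m
    intro hdet
    have h1 : Ideal.Quotient.mk m A.det = (ebar'.toMatrix b).det := by
      rw [RingHom.map_det]
      congr 1
      ext i j
      rw [RingHom.mapMatrix_apply, Matrix.map_apply, hA, Module.Basis.toMatrix_apply, Module.Basis.toMatrix_apply, hb j, hebar']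
    have h2 : IsUnit (ebar'.toMatrix b).det := by
      rw [← Module.Basis.det_apply]
      exact ebar'.isUnit_det b
    rw [← h1] at h2
    exact h2.ne_zero (Ideal.Quotient.eq_zero_iff_mem.mpr hdet)
  · -- the basis of the localized module
    set f := A.det
    let g := LocalizedModule.mkLinearMap (Submonoid.powers f) M
    let eL : Module.Basis (Fin n) (Localization.Away f) (LocalizedModule (Submonoid.powers f) M) :=
      e'.ofIsLocalizedModule (Localization.Away f) (Submonoid.powers f) g
    have hdet : IsUnit (eL.det fun i => g (ξ i)) := by
      rw [Module.Basis.det_apply]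
      have hmat : eL.toMatrix (fun i => g (ξ i)) =
          A.map (algebraMap R (Localization.Away f)) := by
        ext i j
        rw [Matrix.map_apply, Module.Basis.toMatrix_apply, Module.Basis.ofIsLocalizedModule_repr_apply, hA,
          Module.Basis.toMatrix_apply]
      rw [hmat, ← RingHom.mapMatrix_apply, ← RingHom.map_det]
      exact IsLocalization.Away.algebraMap_isUnit f
    obtain ⟨hli, hsp⟩ := (Module.Basis.is_basis_iff_det eL).mpr hdet
    exact ⟨Module.Basis.mk hli hsp.ge, fun i => Module.Basis.mk_apply hli hsp.ge i⟩
end
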